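/- Let N = 2M+1, M ≥ 1, ρ > 0, and S = T_θ^T S_{R_0}. The spectral condition number of S equals: √2·(ρ/R_0)^M if R_0 < ρ; √2·(ρ/R_0) if ρ ≤ R_0 < 2^{1/(2M)}ρ; (R_0/ρ)^{M-1} if 2^{1/(2M)}ρ ≤ R_0 < √2·ρ; and (1/√2)·(R_0/ρ)^M if R_0 ≥ √2·ρ. -/

import Mathlib

/-!
The rows of `T_θ` are orthogonal for the discrete inner product on the nodes, because
`∑ⱼ exp(i m θⱼ) = 0` for `0 < |m| < N`; hence `T_θ T_θᵀ = (N/2) diag(2, 1, …, 1)` and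
`SᵀS = S_{R₀} T_θ T_θᵀ S_{R₀} = (N/2) diag(2, q², q², …, q^{2M}, q^{2M})` with `q = R₀/ρ`.
For `SᵀS = diag d` with `d > 0` one has `‖S‖² = max d` and `‖S⁻¹‖⁻² = min d`, so
`cond₂(S) = √(max d / min d)`. As `k ↦ q^{2k}` is monotone, the extreme entries are among
`2, q², q^{2M}`, and the four regimes are exactly the orderings of these three numbers.
-/

open Matrix
open scoped Matrix.Norms.L2Operator

noncomputable section

/-- Equispaced collocation angles `θ_j = 2π(j-1)/N` (0-based: `θ_j = 2πj/N`). -/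
def theta (N : ℕ) (j : Fin N) : ℝ := 2 * Real.pi * j / N

/-- The trigonometric collocation matrix `T_θ ∈ ℝ^{(2M+1)×(2M+1)}`:
row `1` (index 0) is all ones, row `2k` is `cos(kθ_j)`, row `2k+1` is `sin(kθ_j)`.
In 0-based indexing, the frequency of row `i ≥ 1` is `k = (i+1)/2`. -/
def Ttheta (M : ℕ) : Matrix (Fin (2*M+1)) (Fin (2*M+1)) ℝ := fun i j =>
  if i.val = 0 then 1
  else if i.val % 2 = 1 then Real.cos ((((i.val+1)/2 : ℕ) : ℝ) * theta (2*M+1) j)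
  else Real.sin ((((i.val+1)/2 : ℕ) : ℝ) * theta (2*M+1) j)

/-- The diagonal matrix `S_{R₀} = diag(1, (R₀/ρ), (R₀/ρ), …, (R₀/ρ)^M, (R₀/ρ)^M)`:
the diagonal entry at (0-based) index `i ≥ 1` is `(R₀/ρ)^k` with `k = (i+1)/2`. -/
def SR (M : ℕ) (ρ R₀ : ℝ) : Matrix (Fin (2*M+1)) (Fin (2*M+1)) ℝ :=
  Matrix.diagonal (fun i : Fin (2*M+1) =>
    if i.val = 0 then 1 else (R₀ / ρ) ^ ((i.val+1)/2 : ℕ))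

open Complex in
lemma sum_exp_mul_theta_eq_zero {N : ℕ} {m : ℤ} (hm : m ≠ 0) (hmN : m.natAbs < N) :
    ∑ j : Fin N, exp (↑(m * theta N j) * I) = 0 := by
  have hN : N ≠ 0 := by omega
  set ζ := exp (2 * Real.pi * I / N)
  have hζ : IsPrimitiveRoot ζ N := isPrimitiveRoot_exp N hN
  have hterm : ∀ j : Fin N, exp (↑(m * theta N j) * I) = (ζ ^ m) ^ (j : ℕ) := by
    intro j
    rw [← zpow_natCast, ← _root_.zpow_mul, ← exp_int_mul]
    congr 1
    push_cast [theta]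
    field_simp
  have hne : ζ ^ m ≠ 1 := by
    rw [Ne, hζ.zpow_eq_one_iff_dvd]
    exact fun h => hm (Int.eq_zero_of_dvd_of_natAbs_lt_natAbs h (by simpa using hmN))
  have hpow : (ζ ^ m) ^ N = 1 := by
    rw [← zpow_natCast, ← _root_.zpow_mul, mul_comm, _root_.zpow_mul, zpow_natCast, hζ.pow_eq_one,
      _root_.one_zpow]
  simp only [hterm, Fin.sum_univ_eq_sum_range (fun j => (ζ ^ m) ^ j), geom_sum_eq hne, hpow,
    sub_self, zero_div]

lemma sum_cos_mul_theta {N : ℕ} {m : ℤ} (hmN : m.natAbs < N) :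
    ∑ j : Fin N, Real.cos (m * theta N j) = if m = 0 then (N : ℝ) else 0 := by
  split_ifs with hm
  · simp [hm]
  · simpa only [Complex.re_sum, Complex.exp_ofReal_mul_I_re, Complex.zero_re] using
      congrArg Complex.re (sum_exp_mul_theta_eq_zero hm hmN)

lemma sum_sin_mul_theta {N : ℕ} {m : ℤ} (hmN : m.natAbs < N) :
    ∑ j : Fin N, Real.sin (m * theta N j) = 0 := by
  rcases eq_or_ne m 0 with rfl | hm
  · simp
  · simpa only [Complex.im_sum, Complex.exp_ofReal_mul_I_im, Complex.zero_im] using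
      congrArg Complex.im (sum_exp_mul_theta_eq_zero hm hmN)

section ProductSums

variable {N a b : ℕ}

lemma sum_cos_mul_cos_theta (hab : a + b < N) :
    ∑ j : Fin N, Real.cos (a * theta N j) * Real.cos (b * theta N j) =
      if a = b then (if a = 0 then (N : ℝ) else N / 2) else 0 := by
  have h (j : Fin N) : Real.cos (a * theta N j) * Real.cos (b * theta N j) =
      (Real.cos (((a - b : ℤ) : ℝ) * theta N j) +
        Real.cos (((a + b : ℤ) : ℝ) * theta N j)) / 2 := by
    push_cast
    rw [sub_mul, add_mul, Real.cos_sub, Real.cos_add]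
    ring
  simp only [h, ← Finset.sum_div, Finset.sum_add_distrib,
    sum_cos_mul_theta (show (a - b : ℤ).natAbs < N by omega),
    sum_cos_mul_theta (show (a + b : ℤ).natAbs < N by omega)]
  split_ifs <;> first | omega | ring

lemma sum_sin_mul_sin_theta (hab : a + b < N) :
    ∑ j : Fin N, Real.sin (a * theta N j) * Real.sin (b * theta N j) =
      if a = b ∧ a ≠ 0 then (N : ℝ) / 2 else 0 := by
  have h (j : Fin N) : Real.sin (a * theta N j) * Real.sin (b * theta N j) =
      (Real.cos (((a - b : ℤ) : ℝ) * theta N j) -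
        Real.cos (((a + b : ℤ) : ℝ) * theta N j)) / 2 := by
    push_cast
    rw [sub_mul, add_mul, Real.cos_sub, Real.cos_add]
    ring
  simp only [h, ← Finset.sum_div, Finset.sum_sub_distrib,
    sum_cos_mul_theta (show (a - b : ℤ).natAbs < N by omega),
    sum_cos_mul_theta (show (a + b : ℤ).natAbs < N by omega)]
  split_ifs <;> first | omega | ring

lemma sum_sin_mul_cos_theta (hab : a + b < N) :
    ∑ j : Fin N, Real.sin (a * theta N j) * Real.cos (b * theta N j) = 0 := by
  have h (j : Fin N) : Real.sin (a * theta N j) * Real.cos (b * theta N j) =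
      (Real.sin (((a - b : ℤ) : ℝ) * theta N j) +
        Real.sin (((a + b : ℤ) : ℝ) * theta N j)) / 2 := by
    push_cast
    rw [sub_mul, add_mul, Real.sin_sub, Real.sin_add]
    ring
  simp only [h, ← Finset.sum_div, Finset.sum_add_distrib,
    sum_sin_mul_theta (show (a - b : ℤ).natAbs < N by omega),
    sum_sin_mul_theta (show (a + b : ℤ).natAbs < N by omega)]
  norm_num

end ProductSums

-- The all-ones row `0` of `T_θ` is the cosine row of frequency `0`.
lemma Ttheta_apply (M : ℕ) (i j : Fin (2*M+1)) :
    Ttheta M i j = if (i : ℕ) % 2 = 0 ∧ (i : ℕ) ≠ 0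
      then Real.sin ((((i : ℕ) + 1) / 2 : ℕ) * theta (2*M+1) j)
      else Real.cos ((((i : ℕ) + 1) / 2 : ℕ) * theta (2*M+1) j) := by
  unfold Ttheta
  split_ifs <;> first | omega | simp_all

lemma Ttheta_mul_transpose (M : ℕ) :
    Ttheta M * (Ttheta M)ᵀ =
      diagonal fun i : Fin (2*M+1) => ((2*M+1 : ℕ) : ℝ) / 2 * if (i : ℕ) = 0 then 2 else 1 := by
  ext i i'
  have hi := i.isLt
  have hi' := i'.isLt
  have hfreq : ((i : ℕ) + 1) / 2 + ((i' : ℕ) + 1) / 2 < 2*M+1 := by omega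
  have hfreq' : ((i' : ℕ) + 1) / 2 + ((i : ℕ) + 1) / 2 < 2*M+1 := by omega
  simp only [mul_apply, transpose_apply, diagonal_apply, Ttheta_apply, Fin.ext_iff]
  by_cases hs : (i : ℕ) % 2 = 0 ∧ (i : ℕ) ≠ 0 <;> by_cases hs' : (i' : ℕ) % 2 = 0 ∧ (i' : ℕ) ≠ 0
  · simp only [if_pos hs, if_pos hs', sum_sin_mul_sin_theta hfreq]
    split_ifs <;> first | omega | ring
  · simp only [if_pos hs, if_neg hs', sum_sin_mul_cos_theta hfreq]
    rw [if_neg (by omega)]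
  · simp only [if_neg hs, if_pos hs', mul_comm (Real.cos _), sum_sin_mul_cos_theta hfreq']
    rw [if_neg (by omega)]
  · simp only [if_neg hs, if_neg hs', sum_cos_mul_cos_theta hfreq]
    split_ifs <;> first | omega | ring

def gramWeight (M : ℕ) (p : ℝ) (i : Fin (2*M+1)) : ℝ :=
  if (i : ℕ) = 0 then 2 else p ^ (((i : ℕ) + 1) / 2)

lemma transpose_mul_self_eq_diagonal_gramWeight (M : ℕ) (ρ R₀ : ℝ) :
    ((Ttheta M)ᵀ * SR M ρ R₀)ᵀ * ((Ttheta M)ᵀ * SR M ρ R₀) =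
      diagonal fun i => ((2*M+1 : ℕ) : ℝ) / 2 * gramWeight M ((R₀ / ρ) ^ 2) i := by
  rw [transpose_mul, transpose_transpose, SR, diagonal_transpose, Matrix.mul_assoc,
    ← Matrix.mul_assoc (Ttheta M), Ttheta_mul_transpose, diagonal_mul_diagonal,
    diagonal_mul_diagonal]
  congr 1
  funext i
  unfold gramWeight
  split_ifs <;> ring

lemma range_gramWeight (M : ℕ) (p : ℝ) :
    Set.range (gramWeight M p) = insert 2 ((p ^ ·) '' Set.Icc 1 M) := by
  ext x
  simp only [Set.mem_range, Set.mem_insert_iff, Set.mem_image, Set.mem_Icc, gramWeight]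
  constructor
  · rintro ⟨i, rfl⟩
    have := i.isLt
    split_ifs with hi
    · exact Or.inl rfl
    · exact Or.inr ⟨_, ⟨by omega, by omega⟩, rfl⟩
  · rintro (rfl | ⟨k, ⟨hk1, hkM⟩, rfl⟩)
    · exact ⟨0, if_pos rfl⟩
    · refine ⟨⟨2 * k - 1, by omega⟩, ?_⟩
      simp only [show 2 * k - 1 ≠ 0 by omega, show (2 * k - 1 + 1) / 2 = k by omega, if_false]

lemma pi_norm_eq_of_isGreatest_range {n : Type*} [Fintype n] {d : n → ℝ} {a : ℝ}
    (hd : ∀ i, 0 ≤ d i) (ha : IsGreatest (Set.range d) a) : ‖d‖ = a := by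
  obtain ⟨i, rfl⟩ := ha.1
  refine le_antisymm ((pi_norm_le_iff_of_nonneg (hd i)).2 fun j => ?_) ?_
  · rw [Real.norm_of_nonneg (hd j)]
    exact ha.2 ⟨j, rfl⟩
  · simpa only [Real.norm_of_nonneg (hd i)] using norm_le_pi_norm d i

section ConditionNumber

variable {n : Type*} [Fintype n] [DecidableEq n] {S : Matrix n n ℝ} {d : n → ℝ} {a b : ℝ}

lemma l2_opNorm_eq_sqrt_of_transpose_mul_self_eq_diagonal (h : Sᵀ * S = diagonal d)
    (hd : ∀ i, 0 ≤ d i) (ha : IsGreatest (Set.range d) a) : ‖S‖ = √a := by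
  have hsq : ‖S‖ * ‖S‖ = a := by
    rw [← l2_opNorm_conjTranspose_mul_self, conjTranspose_eq_transpose_of_trivial, h,
      l2_opNorm_diagonal, pi_norm_eq_of_isGreatest_range hd ha]
  rw [← hsq, Real.sqrt_mul_self (norm_nonneg S)]

lemma inv_mul_transpose_inv_eq_diagonal (h : Sᵀ * S = diagonal d) (hd : ∀ i, d i ≠ 0) :
    S⁻¹ * (S⁻¹)ᵀ = diagonal d⁻¹ := by
  rw [transpose_nonsing_inv, ← Matrix.mul_inv_rev, h]
  refine inv_eq_left_inv ?_
  rw [diagonal_mul_diagonal, ← diagonal_one]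
  exact congrArg diagonal (funext fun i => inv_mul_cancel₀ (hd i))

lemma l2_opNorm_inv_eq_of_transpose_mul_self_eq_diagonal (h : Sᵀ * S = diagonal d)
    (hb : IsLeast (Set.range d) b) (hb0 : 0 < b) : ‖S⁻¹‖ = (√b)⁻¹ := by
  have hd (i : n) : b ≤ d i := hb.2 ⟨i, rfl⟩
  have hinv : IsGreatest (Set.range d⁻¹) b⁻¹ := by
    obtain ⟨i, hi⟩ := hb.1
    exact ⟨⟨i, by simp [hi]⟩, Set.forall_mem_range.2 fun j => inv_anti₀ hb0 (hd j)⟩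
  have hT : ((S⁻¹)ᵀ)ᵀ * (S⁻¹)ᵀ = diagonal d⁻¹ := by
    rw [transpose_transpose,
      inv_mul_transpose_inv_eq_diagonal h fun i => (hb0.trans_le (hd i)).ne']
  rw [← l2_opNorm_conjTranspose, conjTranspose_eq_transpose_of_trivial,
    l2_opNorm_eq_sqrt_of_transpose_mul_self_eq_diagonal hT
      (fun i => inv_nonneg.2 (hb0.trans_le (hd i)).le) hinv, Real.sqrt_inv]

lemma l2_opNorm_mul_l2_opNorm_inv_of_transpose_mul_self_eq_diagonal (h : Sᵀ * S = diagonal d)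
    (ha : IsGreatest (Set.range d) a) (hb : IsLeast (Set.range d) b) (hb0 : 0 < b) :
    ‖S‖ * ‖S⁻¹‖ = √(a / b) := by
  rw [l2_opNorm_eq_sqrt_of_transpose_mul_self_eq_diagonal h
      (fun i => hb0.le.trans (hb.2 ⟨i, rfl⟩)) ha,
    l2_opNorm_inv_eq_of_transpose_mul_self_eq_diagonal h hb hb0, Real.sqrt_div' a hb0.le,
    div_eq_mul_inv]

end ConditionNumber

lemma sqrt_sq_pow {x : ℝ} (hx : 0 ≤ x) (n : ℕ) : √((x ^ 2) ^ n) = x ^ n := by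
  rw [← pow_mul, mul_comm, pow_mul, Real.sqrt_sq (pow_nonneg hx n)]

section PowImage

variable {p : ℝ} {M : ℕ}

lemma isLeast_pow_image_Icc_of_one_le (hp : 1 ≤ p) (hM : 1 ≤ M) :
    IsLeast ((p ^ ·) '' Set.Icc 1 M) p := by
  simpa using (pow_right_mono₀ hp).monotoneOn _ |>.map_isLeast (isLeast_Icc hM)

lemma isGreatest_pow_image_Icc_of_one_le (hp : 1 ≤ p) (hM : 1 ≤ M) :
    IsGreatest ((p ^ ·) '' Set.Icc 1 M) (p ^ M) :=
  (pow_right_mono₀ hp).monotoneOn _ |>.map_isGreatest (isGreatest_Icc hM)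

lemma isGreatest_pow_image_Icc_of_le_one (hp0 : 0 ≤ p) (hp : p ≤ 1) (hM : 1 ≤ M) :
    IsGreatest ((p ^ ·) '' Set.Icc 1 M) p := by
  simpa using (pow_right_anti₀ hp0 hp).antitoneOn _ |>.map_isLeast (isLeast_Icc hM)

lemma isLeast_pow_image_Icc_of_le_one (hp0 : 0 ≤ p) (hp : p ≤ 1) (hM : 1 ≤ M) :
    IsLeast ((p ^ ·) '' Set.Icc 1 M) (p ^ M) :=
  (pow_right_anti₀ hp0 hp).antitoneOn _ |>.map_isGreatest (isGreatest_Icc hM)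

end PowImage

section Collocation

variable {M : ℕ} {ρ R₀ A B : ℝ}

lemma condS_eq_sqrt_div (hA : IsGreatest (insert 2 ((((R₀ / ρ) ^ 2) ^ ·) '' Set.Icc 1 M)) A)
    (hB : IsLeast (insert 2 ((((R₀ / ρ) ^ 2) ^ ·) '' Set.Icc 1 M)) B) (hB0 : 0 < B) :
    ‖(Ttheta M)ᵀ * SR M ρ R₀‖ * ‖((Ttheta M)ᵀ * SR M ρ R₀)⁻¹‖ = √(A / B) := by
  set c : ℝ := ((2*M+1 : ℕ) : ℝ) / 2
  have hc : 0 < c := by positivity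
  have hrange : Set.range (fun i => c * gramWeight M ((R₀ / ρ) ^ 2) i) =
      (c * ·) '' insert 2 ((((R₀ / ρ) ^ 2) ^ ·) '' Set.Icc 1 M) := by
    rw [← range_gramWeight, ← Set.range_comp]
    rfl
  have hmono : Monotone (c * ·) := fun _ _ h => mul_le_mul_of_nonneg_left h hc.le
  rw [l2_opNorm_mul_l2_opNorm_inv_of_transpose_mul_self_eq_diagonal
    (transpose_mul_self_eq_diagonal_gramWeight M ρ R₀) (hrange ▸ hmono.map_isGreatest hA)
    (hrange ▸ hmono.map_isLeast hB) (mul_pos hc hB0), mul_div_mul_left _ _ hc.ne']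

lemma condS_of_le_one (hM : 1 ≤ M) (hq0 : 0 < R₀ / ρ) (hq : R₀ / ρ ≤ 1) :
    ‖(Ttheta M)ᵀ * SR M ρ R₀‖ * ‖((Ttheta M)ᵀ * SR M ρ R₀)⁻¹‖ = √2 / (R₀ / ρ) ^ M := by
  have hp0 : 0 ≤ (R₀ / ρ) ^ 2 := by positivity
  have hp : (R₀ / ρ) ^ 2 ≤ 1 := pow_le_one₀ hq0.le hq
  have hpM : ((R₀ / ρ) ^ 2) ^ M ≤ 1 := pow_le_one₀ hp0 hp
  rw [condS_eq_sqrt_div ((isGreatest_pow_image_Icc_of_le_one hp0 hp hM).insert 2)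
      ((isLeast_pow_image_Icc_of_le_one hp0 hp hM).insert 2) (by positivity),
    max_eq_left (by linarith), min_eq_right (by linarith), Real.sqrt_div' _ (by positivity),
    sqrt_sq_pow hq0.le]

lemma condS_of_one_le (hM : 1 ≤ M) (hq : 1 ≤ R₀ / ρ) :
    ‖(Ttheta M)ᵀ * SR M ρ R₀‖ * ‖((Ttheta M)ᵀ * SR M ρ R₀)⁻¹‖ =
      √(max 2 (((R₀ / ρ) ^ 2) ^ M) / min 2 ((R₀ / ρ) ^ 2)) := by
  have hp : 1 ≤ (R₀ / ρ) ^ 2 := one_le_pow₀ hq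
  exact condS_eq_sqrt_div ((isGreatest_pow_image_Icc_of_one_le hp hM).insert 2)
    ((isLeast_pow_image_Icc_of_one_le hp hM).insert 2) (lt_min two_pos (by linarith))

end Collocation

/-- The spectral condition number of `S = T_θᵀ S_{R₀}` on a circular boundary of radius `ρ`:
`√2(ρ/R₀)^M` for `R₀ < ρ`; `√2(ρ/R₀)` for `ρ ≤ R₀ < 2^{1/(2M)}ρ`;
`(R₀/ρ)^{M-1}` for `2^{1/(2M)}ρ ≤ R₀ < √2ρ`; and `(1/√2)(R₀/ρ)^M` for `R₀ ≥ √2ρ`. -/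
theorem condS_piecewise (M : ℕ) (hM : 1 ≤ M) (ρ R₀ : ℝ) (hρ : 0 < ρ) (hR₀ : 0 < R₀) :
    (R₀ < ρ →
      ‖(Ttheta M)ᵀ * SR M ρ R₀‖ * ‖((Ttheta M)ᵀ * SR M ρ R₀)⁻¹‖ =
        Real.sqrt 2 * (ρ / R₀) ^ M) ∧
    (ρ ≤ R₀ → R₀ < (2 : ℝ) ^ ((1 : ℝ) / (2 * M)) * ρ →
      ‖(Ttheta M)ᵀ * SR M ρ R₀‖ * ‖((Ttheta M)ᵀ * SR M ρ R₀)⁻¹‖ =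
        Real.sqrt 2 * (ρ / R₀)) ∧
    ((2 : ℝ) ^ ((1 : ℝ) / (2 * M)) * ρ ≤ R₀ → R₀ < Real.sqrt 2 * ρ →
      ‖(Ttheta M)ᵀ * SR M ρ R₀‖ * ‖((Ttheta M)ᵀ * SR M ρ R₀)⁻¹‖ =
        (R₀ / ρ) ^ (M - 1)) ∧
    (Real.sqrt 2 * ρ ≤ R₀ →
      ‖(Ttheta M)ᵀ * SR M ρ R₀‖ * ‖((Ttheta M)ᵀ * SR M ρ R₀)⁻¹‖ =
        (1 / Real.sqrt 2) * (R₀ / ρ) ^ M) := by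
  have hq0 : 0 < R₀ / ρ := div_pos hR₀ hρ
  have hroot : R₀ < (2 : ℝ) ^ ((1 : ℝ) / (2 * M)) * ρ ↔ ((R₀ / ρ) ^ 2) ^ M < 2 := by
    rw [← div_lt_iff₀ hρ, one_div, Real.lt_rpow_inv_iff_of_pos hq0.le zero_le_two (by positivity),
      ← pow_mul, ← Real.rpow_natCast]
    push_cast
    rfl
  have hsqrt : R₀ < √2 * ρ ↔ (R₀ / ρ) ^ 2 < 2 := by rw [← div_lt_iff₀ hρ, Real.lt_sqrt hq0.le]
  have one_le_of_one_le_sq (h : 1 ≤ (R₀ / ρ) ^ 2) : 1 ≤ R₀ / ρ :=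
    (one_le_pow_iff_of_nonneg hq0.le two_ne_zero).1 h
  refine ⟨fun h => ?_, fun h₁ h₂ => ?_, fun h₁ h₂ => ?_, fun h => ?_⟩
  · rw [condS_of_le_one hM hq0 ((div_lt_one hρ).2 h).le, div_eq_mul_inv, ← inv_pow, inv_div]
  · have hq : 1 ≤ R₀ / ρ := (one_le_div hρ).2 h₁
    have hp : (R₀ / ρ) ^ 2 ≤ ((R₀ / ρ) ^ 2) ^ M := le_self_pow₀ (one_le_pow₀ hq) (by omega)
    rw [condS_of_one_le hM hq, max_eq_left (hroot.1 h₂).le,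
      min_eq_right (by linarith [hroot.1 h₂]),
      Real.sqrt_div' _ (by positivity), Real.sqrt_sq hq0.le, div_eq_mul_inv, inv_div]
  · have hpM : 2 ≤ ((R₀ / ρ) ^ 2) ^ M := (le_iff_le_iff_lt_iff_lt.2 hroot).1 h₁
    have hq : 1 ≤ R₀ / ρ := one_le_of_one_le_sq <|
      (one_le_pow_iff_of_nonneg (n := M) (by positivity) (by omega)).1 (by linarith)
    rw [condS_of_one_le hM hq, max_eq_right hpM, min_eq_right (hsqrt.1 h₂).le,
      Real.sqrt_div' _ (by positivity), Real.sqrt_sq hq0.le, sqrt_sq_pow hq0.le,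
      pow_sub₀ _ hq0.ne' hM, pow_one, div_eq_mul_inv]
  · have hp : 2 ≤ (R₀ / ρ) ^ 2 := (le_iff_le_iff_lt_iff_lt.2 hsqrt).1 h
    rw [condS_of_one_le hM (one_le_of_one_le_sq (by linarith)),
      max_eq_right (hp.trans (le_self_pow₀ (by linarith) (by omega))), min_eq_left hp,
      Real.sqrt_div' _ zero_le_two, sqrt_sq_pow hq0.le, one_div_mul_eq_div]
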